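/- Let f(x) := sin x + sin 2x. Then the transformed covariance satisfies τ(f,f) = sinh(4·σij)·e^{−2(σii+σjj)} + sinh(2·σij)·e^{−(2σii + σjj/2)} + sinh(2·σij)·e^{−(σii/2 + 2σjj)} + sinh(σij)·e^{−(σii+σjj)/2}. -/

import Mathlib

open MeasureTheory Real

/-- Centered bivariate Gaussian density with covariance entries `σii, σjj, σij`. -/
noncomputable def gaussPDF2 (σii σjj σij : ℝ) (x w : ℝ) : ℝ :=
  (1 / (2 * π * Real.sqrt (σii * σjj - σij ^ 2))) *
    Real.exp (-(σjj * x ^ 2 - 2 * σij * x * w + σii * w ^ 2) / (2 * (σii * σjj - σij ^ 2)))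

/-- Centered univariate Gaussian density with variance `σ`. -/
noncomputable def gaussPDF1 (σ x : ℝ) : ℝ :=
  (1 / Real.sqrt (2 * π * σ)) * Real.exp (-x ^ 2 / (2 * σ))

/-- Transformed mean `ν(f)`. -/
noncomputable def transMean (σ : ℝ) (f : ℝ → ℝ) : ℝ := ∫ x : ℝ, f x * gaussPDF1 σ x

/-- Transformed covariance `τ(f, g)`. -/
noncomputable def transCov (σii σjj σij : ℝ) (f g : ℝ → ℝ) : ℝ :=
  (∫ q : ℝ × ℝ, f q.1 * g q.2 * gaussPDF2 σii σjj σij q.1 q.2) -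
    transMean σii f * transMean σjj g

open ProbabilityTheory NNReal

/-! Conditioning on the first coordinate, the bivariate density factors as the law
`N(0, σii)` of `x` times the law `N(σij / σii · x, d / σii)` of `w` given `x`. Two applications of
the Gaussian characteristic function then give
`E[cos (a x + b w)] = exp (-(a² σii + 2 a b σij + b² σjj) / 2)`, and product-to-sum turns this into
`E[sin (a x) sin (b w)] = sinh (a b σij) · exp (-(a² σii + b² σjj) / 2)`. Since `sin x + sin 2x` is
odd its Gaussian means vanish, and expanding the product bilinearly gives the four terms. -/

lemma integral_cexp_gaussianReal (μ : ℝ) (v : ℝ≥0) (c b : ℝ) :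
    ∫ x, Complex.exp (↑(c + b * x) * Complex.I) ∂gaussianReal μ v =
      ↑(exp (-(v * b ^ 2 / 2))) * Complex.exp (↑(c + b * μ) * Complex.I) := by
  have h := charFun_gaussianReal (μ := μ) (v := v) b
  rw [charFun_apply_real] at h
  push_cast
  simp_rw [add_mul, Complex.exp_add, integral_const_mul, h, ← Complex.exp_add]
  ring_nf

lemma integrable_cexp_ofReal_mul_I {α : Type*} [MeasurableSpace α] (ν : Measure α)
    [IsFiniteMeasure ν] {g : α → ℝ} (hg : Measurable g) :
    Integrable (fun x => Complex.exp (g x * Complex.I)) ν :=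
  Integrable.of_bound (by fun_prop) 1 (ae_of_all _ fun x => by
    rw [Complex.norm_exp_ofReal_mul_I])

lemma integral_cos_gaussianReal (μ : ℝ) (v : ℝ≥0) (c b : ℝ) :
    ∫ x, cos (c + b * x) ∂gaussianReal μ v = exp (-(v * b ^ 2 / 2)) * cos (c + b * μ) := by
  have h := congrArg Complex.re (integral_cexp_gaussianReal μ v c b)
  rw [← RCLike.re_to_complex, ← integral_re (integrable_cexp_ofReal_mul_I _ (by fun_prop)),
    Complex.re_ofReal_mul] at h
  simpa only [RCLike.re_to_complex, Complex.exp_ofReal_mul_I_re] using h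

lemma integral_sin_mul_gaussianReal (μ : ℝ) (v : ℝ≥0) (b : ℝ) :
    ∫ x, sin (b * x) ∂gaussianReal μ v = exp (-(v * b ^ 2 / 2)) * sin (b * μ) := by
  have h := congrArg Complex.im (integral_cexp_gaussianReal μ v 0 b)
  rw [← RCLike.im_to_complex, ← integral_im (integrable_cexp_ofReal_mul_I _ (by fun_prop)),
    Complex.im_ofReal_mul] at h
  simpa only [RCLike.im_to_complex, Complex.exp_ofReal_mul_I_im, zero_add] using h

lemma gaussPDF1_eq_gaussianPDFReal {σ : ℝ} (hσ : 0 ≤ σ) :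
    gaussPDF1 σ = gaussianPDFReal 0 σ.toNNReal := by
  ext x
  simp [gaussPDF1, gaussianPDFReal, Real.coe_toNNReal _ hσ]

lemma transMean_eq_integral_gaussianReal {σ : ℝ} (hσ : 0 < σ) (f : ℝ → ℝ) :
    transMean σ f = ∫ x, f x ∂gaussianReal 0 σ.toNNReal := by
  simp_rw [integral_gaussianReal_eq_integral_smul (Real.toNNReal_pos.2 hσ).ne', transMean,
    gaussPDF1_eq_gaussianPDFReal hσ.le, smul_eq_mul, mul_comm]

lemma transMean_sin_add_sin {σ : ℝ} (hσ : 0 < σ) (a b : ℝ) :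
    transMean σ (fun x => sin (a * x) + sin (b * x)) = 0 := by
  have hsin (c : ℝ) : Integrable (fun x => sin (c * x)) (gaussianReal 0 σ.toNNReal) :=
    Integrable.of_bound (by fun_prop) 1 (ae_of_all _ fun _ => abs_sin_le_one _)
  rw [transMean_eq_integral_gaussianReal hσ, integral_add (hsin a) (hsin b),
    integral_sin_mul_gaussianReal, integral_sin_mul_gaussianReal]
  simp

section Bivariate

variable {σii σjj σij : ℝ}

lemma gaussPDF2_eq_mul_gaussianPDFReal (hii : 0 < σii) (hd : 0 < σii * σjj - σij ^ 2)
    (x w : ℝ) :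
    gaussPDF2 σii σjj σij x w = gaussianPDFReal 0 σii.toNNReal x *
      gaussianPDFReal (σij / σii * x) ((σii * σjj - σij ^ 2) / σii).toNNReal w := by
  simp only [gaussPDF2, gaussianPDFReal, sub_zero, Real.coe_toNNReal _ hii.le,
    Real.coe_toNNReal _ (div_pos hd hii).le]
  have hnorm : 1 / (2 * π * √(σii * σjj - σij ^ 2))
      = (√(2 * π * σii))⁻¹ * (√(2 * π * ((σii * σjj - σij ^ 2) / σii)))⁻¹ := by
    rw [← mul_inv, ← Real.sqrt_mul (by positivity), one_div,
      show 2 * π * σii * (2 * π * ((σii * σjj - σij ^ 2) / σii))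
        = (2 * π) ^ 2 * (σii * σjj - σij ^ 2) by field_simp,
      Real.sqrt_mul (by positivity), Real.sqrt_sq (by positivity)]
  have hexp : -(σjj * x ^ 2 - 2 * σij * x * w + σii * w ^ 2) / (2 * (σii * σjj - σij ^ 2))
      = -x ^ 2 / (2 * σii)
        + -(w - σij / σii * x) ^ 2 / (2 * ((σii * σjj - σij ^ 2) / σii)) := by
    rw [div_add_div _ _ (by positivity) (by positivity), div_eq_div_iff (by positivity)
      (by positivity)]
    field_simp
    ring
  rw [hnorm, hexp, Real.exp_add]
  ring

lemma integrable_gaussPDF2 (hii : 0 < σii) (hd : 0 < σii * σjj - σij ^ 2) :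
    Integrable (fun q : ℝ × ℝ => gaussPDF2 σii σjj σij q.1 q.2) := by
  simp_rw [gaussPDF2_eq_mul_gaussianPDFReal hii hd]
  rw [Measure.volume_eq_prod, integrable_prod_iff (by fun_prop)]
  refine ⟨ae_of_all _ fun x => ?_, ?_⟩
  · simp only
    exact (integrable_gaussianPDFReal _ _).const_mul (gaussianPDFReal _ _ x)
  · simp_rw [norm_mul, integral_const_mul, Real.norm_of_nonneg (gaussianPDFReal_nonneg _ _ _),
      integral_gaussianPDFReal_eq_one _ (Real.toNNReal_pos.2 (div_pos hd hii)).ne', mul_one]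
    exact integrable_gaussianPDFReal _ _

lemma integrable_mul_gaussPDF2 (hii : 0 < σii) (hd : 0 < σii * σjj - σij ^ 2)
    {F : ℝ × ℝ → ℝ} (hF : Continuous F) {C : ℝ} (hC : ∀ q, |F q| ≤ C) :
    Integrable (fun q => F q * gaussPDF2 σii σjj σij q.1 q.2) :=
  (integrable_gaussPDF2 hii hd).bdd_mul hF.aestronglyMeasurable (ae_of_all _ hC)

lemma integral_mul_gaussPDF2 (hii : 0 < σii) (hd : 0 < σii * σjj - σij ^ 2) {F : ℝ × ℝ → ℝ}
    (hF : Integrable (fun q => F q * gaussPDF2 σii σjj σij q.1 q.2)) :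
    ∫ q, F q * gaussPDF2 σii σjj σij q.1 q.2 =
      ∫ x, (∫ w, F (x, w) ∂gaussianReal (σij / σii * x) ((σii * σjj - σij ^ 2) / σii).toNNReal)
        ∂gaussianReal 0 σii.toNNReal := by
  rw [Measure.volume_eq_prod] at hF ⊢
  rw [integral_prod _ hF, integral_gaussianReal_eq_integral_smul (Real.toNNReal_pos.2 hii).ne']
  congr 1 with x
  rw [integral_gaussianReal_eq_integral_smul (Real.toNNReal_pos.2 (div_pos hd hii)).ne',
    smul_eq_mul, ← integral_const_mul]
  congr 1 with w
  rw [gaussPDF2_eq_mul_gaussianPDFReal hii hd, smul_eq_mul]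
  ring

lemma integral_cos_mul_gaussPDF2 (hii : 0 < σii) (hd : 0 < σii * σjj - σij ^ 2) (a b : ℝ) :
    ∫ q : ℝ × ℝ, cos (a * q.1 + b * q.2) * gaussPDF2 σii σjj σij q.1 q.2 =
      exp (-(a ^ 2 * σii + 2 * a * b * σij + b ^ 2 * σjj) / 2) := by
  have hF := integrable_mul_gaussPDF2 hii hd (F := fun q => cos (a * q.1 + b * q.2))
    (by fun_prop) fun _ => abs_cos_le_one _
  simp_rw [integral_mul_gaussPDF2 hii hd hF, integral_cos_gaussianReal]
  have hlin : ∀ x, a * x + b * (σij / σii * x) = 0 + (a + b * (σij / σii)) * x := fun x => by ring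
  simp_rw [hlin, integral_const_mul, integral_cos_gaussianReal, mul_zero, add_zero, cos_zero,
    mul_one, ← exp_add, Real.coe_toNNReal _ hii.le, Real.coe_toNNReal _ (div_pos hd hii).le]
  congr 1
  field_simp
  ring

lemma integral_sin_mul_sin_mul_gaussPDF2 (hii : 0 < σii) (hd : 0 < σii * σjj - σij ^ 2)
    (a b : ℝ) :
    ∫ q : ℝ × ℝ, sin (a * q.1) * sin (b * q.2) * gaussPDF2 σii σjj σij q.1 q.2 =
      sinh (a * b * σij) * exp (-(a ^ 2 * σii + b ^ 2 * σjj) / 2) := by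
  have hprod : ∀ q : ℝ × ℝ, sin (a * q.1) * sin (b * q.2) * gaussPDF2 σii σjj σij q.1 q.2 =
      (cos (a * q.1 + -b * q.2) * gaussPDF2 σii σjj σij q.1 q.2
        - cos (a * q.1 + b * q.2) * gaussPDF2 σii σjj σij q.1 q.2) / 2 := fun q => by
    rw [neg_mul, ← sub_eq_add_neg, cos_sub, cos_add]
    ring
  simp_rw [hprod]
  rw [integral_div, integral_sub
    (integrable_mul_gaussPDF2 hii hd (by fun_prop) fun _ => abs_cos_le_one _)
    (integrable_mul_gaussPDF2 hii hd (by fun_prop) fun _ => abs_cos_le_one _),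
    integral_cos_mul_gaussPDF2 hii hd, integral_cos_mul_gaussPDF2 hii hd, sinh_eq,
    div_mul_eq_mul_div, sub_mul, ← exp_add, ← exp_add]
  ring_nf

lemma integral_sin_add_sin_mul_sin_add_sin_mul_gaussPDF2 (hii : 0 < σii)
    (hd : 0 < σii * σjj - σij ^ 2) (a₁ a₂ b₁ b₂ : ℝ) :
    ∫ q : ℝ × ℝ, (sin (a₁ * q.1) + sin (a₂ * q.1)) * (sin (b₁ * q.2) + sin (b₂ * q.2)) *
        gaussPDF2 σii σjj σij q.1 q.2 =
      sinh (a₁ * b₁ * σij) * exp (-(a₁ ^ 2 * σii + b₁ ^ 2 * σjj) / 2) +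
        sinh (a₁ * b₂ * σij) * exp (-(a₁ ^ 2 * σii + b₂ ^ 2 * σjj) / 2) +
        sinh (a₂ * b₁ * σij) * exp (-(a₂ ^ 2 * σii + b₁ ^ 2 * σjj) / 2) +
        sinh (a₂ * b₂ * σij) * exp (-(a₂ ^ 2 * σii + b₂ ^ 2 * σjj) / 2) := by
  have hint (a b : ℝ) : Integrable
      (fun q : ℝ × ℝ => sin (a * q.1) * sin (b * q.2) * gaussPDF2 σii σjj σij q.1 q.2) :=
    integrable_mul_gaussPDF2 hii hd (by fun_prop) fun q => by
      rw [abs_mul]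
      exact mul_le_one₀ (abs_sin_le_one _) (abs_nonneg _) (abs_sin_le_one _)
  have hexpand : ∀ q : ℝ × ℝ,
      (sin (a₁ * q.1) + sin (a₂ * q.1)) * (sin (b₁ * q.2) + sin (b₂ * q.2)) *
        gaussPDF2 σii σjj σij q.1 q.2 =
      sin (a₁ * q.1) * sin (b₁ * q.2) * gaussPDF2 σii σjj σij q.1 q.2 +
        sin (a₁ * q.1) * sin (b₂ * q.2) * gaussPDF2 σii σjj σij q.1 q.2 +
        sin (a₂ * q.1) * sin (b₁ * q.2) * gaussPDF2 σii σjj σij q.1 q.2 +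
        sin (a₂ * q.1) * sin (b₂ * q.2) * gaussPDF2 σii σjj σij q.1 q.2 := fun q => by ring
  simp_rw [hexpand]
  rw [integral_add (((hint _ _).fun_add (hint _ _)).fun_add (hint _ _)) (hint _ _),
    integral_add ((hint _ _).fun_add (hint _ _)) (hint _ _), integral_add (hint _ _) (hint _ _)]
  simp only [integral_sin_mul_sin_mul_gaussPDF2 hii hd]

end Bivariate

theorem transformed_covariance_sin_plus_sin2
    (σii σjj σij : ℝ) (hii : 0 < σii) (hjj : 0 < σjj)
    (hd : 0 < σii * σjj - σij ^ 2) :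
    transCov σii σjj σij (fun x => Real.sin x + Real.sin (2 * x))
        (fun x => Real.sin x + Real.sin (2 * x)) =
      Real.sinh (4 * σij) * Real.exp (-2 * (σii + σjj)) +
        Real.sinh (2 * σij) * Real.exp (-(2 * σii + σjj / 2)) +
        Real.sinh (2 * σij) * Real.exp (-(σii / 2 + 2 * σjj)) +
        Real.sinh σij * Real.exp (-(σii + σjj) / 2) := by
  have hf : (fun x => sin x + sin (2 * x)) = fun x => sin (1 * x) + sin (2 * x) := by
    simp only [one_mul]
  rw [hf, transCov, transMean_sin_add_sin hii, transMean_sin_add_sin hjj,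
    integral_sin_add_sin_mul_sin_add_sin_mul_gaussPDF2 hii hd]
  ring_nf
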